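/- arXiv:1711.08181 — 4 statements merged into one kernel-verified Lean document; each statement's English description precedes it below -/
import Mathlib

section
/- Let K ≥ 1 and L ≥ 1 be integers and let a = (a_0, …, a_K) be real numbers with L vanishing moments: ∑_{k=0}^{K} k^q a_k = 0 for all q ∈ {0, …, L} (with 0^0 = 1) and ∑_{k=0}^{K} k^{L+1} a_k ≠ 0. Let 0 < α ≤ 2 and H₀ ∈ (0,1). Then ∫_ℝ |∑_{p=0}^{K} a_p |p − s|^{H₀ − 1/α}|^α ds < ∞. -/
/-!
Write `β = H₀ - 1/α` and `f(s) = ∑ₚ aₚ |p - s|^β`. On compact sets `f` is a finite combination of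
the functions `|p - s|^β`, which lie in `L^α` there because `|p - s|^(βα)` is locally integrable
when `βα = H₀α - 1 > -1`. At infinity the vanishing zeroth moment lets one replace `|p - s|^β` by
`|p - s|^β - |s|^β`, and the mean value theorem gives `f(s) = O(|s|^(β-1))`; this decays fast
enough since `(β - 1)α = H₀α - 1 - α < -1`.
-/

open MeasureTheory Filter Asymptotics

lemma abs_rpow_sub_rpow_le {β m y z : ℝ} (hβ : β ≤ 1) (hm : 0 < m) (hy : m ≤ y) (hz : m ≤ z) :
    |y ^ β - z ^ β| ≤ |β| * m ^ (β - 1) * |y - z| := by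
  have hderiv : ∀ u ∈ Set.Ici m, HasDerivWithinAt (· ^ β) (β * u ^ (β - 1)) (Set.Ici m) u :=
    fun u hu => (Real.hasDerivAt_rpow_const (.inl (hm.trans_le hu).ne')).hasDerivWithinAt
  have hbound : ∀ u ∈ Set.Ici m, ‖β * u ^ (β - 1)‖ ≤ |β| * m ^ (β - 1) := fun u hu => by
    rw [norm_mul, Real.norm_eq_abs, Real.norm_eq_abs,
      abs_of_nonneg (Real.rpow_nonneg (hm.le.trans hu) _)]
    exact mul_le_mul_of_nonneg_left (Real.rpow_le_rpow_of_nonpos hm hu (by linarith))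
      (abs_nonneg β)
  simpa [Real.norm_eq_abs] using
    (convex_Ici m).norm_image_sub_le_of_norm_hasDerivWithin_le hderiv hbound hz hy

lemma locallyIntegrable_abs_sub_rpow (x : ℝ) {γ : ℝ} (hγ : -1 < γ) :
    LocallyIntegrable (fun s : ℝ => |x - s| ^ γ) := by
  have h₀ : LocallyIntegrable (fun s : ℝ => |s| ^ γ) :=
    locallyIntegrable_of_norm_le_rpow (μ := volume) (C := 1) (α := -γ) (by simp)
      (by simp; linarith) (ae_of_all _ fun s => by simp [abs_of_nonneg, Real.rpow_nonneg])
      (measurable_abs.pow_const γ).aestronglyMeasurable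
  rw [← Measure.map_sub_left_eq_self volume x] at h₀
  exact (locallyIntegrable_map_homeomorph (Homeomorph.subLeft x)).1 h₀

lemma memLp_restrict_abs_sub_rpow (x : ℝ) {α β : ℝ} (hα : 0 < α) (hβα : -1 < β * α)
    {S : Set ℝ} (hS : IsCompact S) :
    MemLp (fun s => |x - s| ^ β) (ENNReal.ofReal α) (volume.restrict S) := by
  refine (integrable_norm_rpow_iff
    (by fun_prop : Measurable fun s => |x - s| ^ β).aestronglyMeasurable
    (by simpa using hα) ENNReal.ofReal_ne_top).1 ?_
  refine ((locallyIntegrable_abs_sub_rpow x hβα).integrableOn_isCompact hS).congr_fun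
    (fun s _ => ?_) hS.measurableSet
  rw [ENNReal.toReal_ofReal hα.le, Real.norm_eq_abs,
    abs_of_nonneg (Real.rpow_nonneg (abs_nonneg _) _), ← Real.rpow_mul (abs_nonneg _)]

variable {ι : Type*}

noncomputable def filterKernel (t : Finset ι) (a x : ι → ℝ) (β s : ℝ) : ℝ :=
  ∑ p ∈ t, a p * |x p - s| ^ β

lemma abs_filterKernel_le {t : Finset ι} {a x : ι → ℝ} {β m s : ℝ} (ha : ∑ p ∈ t, a p = 0)
    (hβ : β ≤ 1) (hm : 0 < m) (hms : m ≤ |s|) (hxs : ∀ p ∈ t, m ≤ |x p - s|) :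
    |filterKernel t a x β s| ≤ |β| * m ^ (β - 1) * ∑ p ∈ t, |a p| * |x p| := by
  have hcentre : filterKernel t a x β s = ∑ p ∈ t, a p * (|x p - s| ^ β - |s| ^ β) := by
    simp only [filterKernel, mul_sub, Finset.sum_sub_distrib, ← Finset.sum_mul, ha, zero_mul,
      sub_zero]
  rw [hcentre, Finset.mul_sum]
  refine (Finset.abs_sum_le_sum_abs _ _).trans (Finset.sum_le_sum fun p hp => ?_)
  have hshift : |(|x p - s| - |s|)| ≤ |x p| := by
    simpa [abs_neg] using abs_abs_sub_abs_le_abs_sub (x p - s) (-s)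
  rw [abs_mul, mul_left_comm]
  gcongr
  exact (abs_rpow_sub_rpow_le hβ hm (hxs p hp) hms).trans (by gcongr)

lemma filterKernel_isBigO_cocompact (t : Finset ι) {a : ι → ℝ} (x : ι → ℝ) {β : ℝ}
    (ha : ∑ p ∈ t, a p = 0) (hβ : β ≤ 1) :
    filterKernel t a x β =O[cocompact ℝ] fun s => (1 + ‖s‖) ^ (β - 1) := by
  have hfar : ∀ᶠ s in cocompact ℝ, ∀ p ∈ t, 1 + 2 * |x p| ≤ |s| := by
    rw [Finset.eventually_all]
    exact fun p _ => tendsto_norm_cocompact_atTop.eventually_ge_atTop _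
  refine IsBigO.of_bound (|β| * 4 ^ (1 - β) * ∑ p ∈ t, |a p| * |x p|) ?_
  filter_upwards [hfar, tendsto_norm_cocompact_atTop.eventually_ge_atTop 1] with s hsfar hone
  rw [Real.norm_eq_abs] at hone ⊢
  have hm : 0 < (1 + |s|) / 4 := by positivity
  have hxs : ∀ p ∈ t, (1 + |s|) / 4 ≤ |x p - s| := fun p hp => by
    linarith [hsfar p hp, abs_sub_abs_le_abs_sub s (x p), abs_sub_comm s (x p)]
  have hpow : ((1 + |s|) / 4) ^ (β - 1) = 4 ^ (1 - β) * (1 + |s|) ^ (β - 1) := by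
    rw [Real.div_rpow (by positivity) (by norm_num), div_eq_mul_inv,
      ← Real.rpow_neg (by norm_num), neg_sub, mul_comm]
  calc |filterKernel t a x β s|
      ≤ |β| * ((1 + |s|) / 4) ^ (β - 1) * ∑ p ∈ t, |a p| * |x p| :=
        abs_filterKernel_le ha hβ hm (by linarith) hxs
    _ = |β| * 4 ^ (1 - β) * (∑ p ∈ t, |a p| * |x p|) * |(1 + |s|) ^ (β - 1)| := by
        rw [hpow, abs_of_nonneg (Real.rpow_nonneg (by positivity : (0 : ℝ) ≤ 1 + |s|) _)]
        ring

lemma locallyIntegrable_abs_filterKernel_rpow (t : Finset ι) (a x : ι → ℝ) {α β : ℝ}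
    (hα : 0 < α) (hβα : -1 < β * α) :
    LocallyIntegrable (fun s => |filterKernel t a x β s| ^ α) := by
  refine locallyIntegrable_iff.2 fun S hS => ?_
  have hmem : MemLp (filterKernel t a x β) (ENNReal.ofReal α) (volume.restrict S) :=
    memLp_finsetSum t fun p _ => (memLp_restrict_abs_sub_rpow (x p) hα hβα hS).const_mul (a p)
  simpa [IntegrableOn, ENNReal.toReal_ofReal hα.le] using
    (integrable_norm_rpow_iff hmem.1 (by simpa using hα) ENNReal.ofReal_ne_top).2 hmem

theorem integrable_abs_filterKernel_rpow (t : Finset ι) {a : ι → ℝ} (x : ι → ℝ) {α β : ℝ}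
    (ha : ∑ p ∈ t, a p = 0) (hα : 0 < α) (hβα : -1 < β * α) (hdecay : (β - 1) * α < -1) :
    Integrable (fun s => |filterKernel t a x β s| ^ α) := by
  have hβ : β ≤ 1 := by nlinarith
  have hbigO := ((filterKernel_isBigO_cocompact t x ha hβ).norm_left).rpow hα.le
    (Eventually.of_forall fun s => Real.rpow_nonneg (by positivity) _)
  refine (locallyIntegrable_abs_filterKernel_rpow t a x hα hβα).integrable_of_isBigO_cocompact
    (hbigO.congr_right fun s => ?_)
    ((integrable_one_add_norm (r := (1 - β) * α) (by simp; linarith)).integrableAtFilter _)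
  rw [← Real.rpow_mul (by positivity)]
  ring_nf

theorem kernel_integral_finite_general
    (K L : ℕ) (a : ℕ → ℝ)
    (hmom : ∀ q ≤ L, ∑ k ∈ Finset.range (K + 1), (k : ℝ) ^ q * a k = 0)
    (α : ℝ) (hα : 0 < α) (H₀ : ℝ) (hH₀ : H₀ ∈ Set.Ioo (0 : ℝ) 1) :
    ∫⁻ s : ℝ, ENNReal.ofReal
        (|∑ p ∈ Finset.range (K + 1), a p * |(p : ℝ) - s| ^ (H₀ - 1 / α)| ^ α) < ⊤ := by
  obtain ⟨hH₀pos, hH₀lt⟩ := hH₀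
  have hsum : ∑ p ∈ Finset.range (K + 1), a p = 0 := by simpa using hmom 0 L.zero_le
  have hlocal : -1 < (H₀ - 1 / α) * α := by
    rw [sub_mul, one_div_mul_cancel hα.ne']
    nlinarith
  have hdecay : (H₀ - 1 / α - 1) * α < -1 := by
    rw [sub_mul, sub_mul, one_div_mul_cancel hα.ne']
    nlinarith
  exact (integrable_abs_filterKernel_rpow _ (fun p : ℕ => (p : ℝ)) hsum hα hlocal
    hdecay).lintegral_lt_top

theorem kernel_integral_finite
    (K L : ℕ) (hK : 1 ≤ K) (hL : 1 ≤ L) (a : ℕ → ℝ)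
    (hmom : ∀ q ≤ L, ∑ k ∈ Finset.range (K + 1), (k : ℝ) ^ q * a k = 0)
    (hmom' : ∑ k ∈ Finset.range (K + 1), (k : ℝ) ^ (L + 1) * a k ≠ 0)
    (α : ℝ) (hα : 0 < α) (hα2 : α ≤ 2) (H₀ : ℝ) (hH₀ : H₀ ∈ Set.Ioo (0 : ℝ) 1) :
    ∫⁻ s : ℝ, ENNReal.ofReal
        (|∑ p ∈ Finset.range (K + 1), a p * |(p : ℝ) - s| ^ (H₀ - 1 / α)| ^ α) < ⊤ :=
  kernel_integral_finite_general K L a hmom α hα H₀ hH₀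
end

section
/- Let 0 < α ≤ 2, let 0 < h₋ ≤ h₊ < 1, and let U ⊂ ℝ be a compact set. For t ∈ U, s ∈ ℝ with s ∉ {0, t} and η ∈ [h₋, h₊], set φ(t, s, η) = |t − s|^{η − 1/α} ln|t − s| − |s|^{η − 1/α} ln|s|. Then sup_{t ∈ U} ∫_ℝ ( sup_{η ∈ [h₋, h₊]} |φ(t, s, η)| )^α ds < ∞. -/
open MeasureTheory

/-- The η-derivative kernel φ(t,s,η) = |t−s|^{η−1/α} ln|t−s| − |s|^{η−1/α} ln|s|. -/
noncomputable def phiKer (α t s η : ℝ) : ℝ :=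
  |t - s| ^ (η - 1 / α) * Real.log |t - s| - |s| ^ (η - 1 / α) * Real.log |s|

/-!
With `f x = x ^ β * log x` and `β = η - 1/α ∈ [hlo - 1/α, hhi - 1/α]`, the kernel is
`φ(t,s,η) = f |t-s| - f |s|`. On a bounded range the logarithm costs only part of the exponent, so
each term is `O(|x| ^ (hlo/2 - 1/α))`, whose `α`-th power is integrable at `0` because `hlo > 0`.
For `|s|` large compared with `|t|`, the mean value theorem for `f` gives
`φ = O(|t| (1 + |s|) ^ ((hhi - 1)/2 - 1/α))`, whose `α`-th power is integrable at infinity because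
`hhi < 1`. So `|φ(t,s,η)| ≤ G(t-s) + G(s)` for a single `G ∈ L^α(ℝ)`, uniformly in `η` and in `t`
in the bounded set `U`; translation invariance and the quasi-triangle inequality of `L^α` then
bound the integrals independently of `t`.
-/

open Set Real
open scoped ENNReal

theorem rpow_mul_abs_log_le_inv_add_rpow {x K δ : ℝ} (hx : 0 ≤ x) (hxK : x ≤ K) (hδ : 0 < δ) :
    x ^ δ * |log x| ≤ δ⁻¹ + K ^ (δ + 1) := by
  have hK : 0 ≤ K := hx.trans hxK
  rcases le_total x 1 with hx1 | hx1
  · rcases hx.eq_or_lt with rfl | hx0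
    · simp only [log_zero, abs_zero, mul_zero]; positivity
    · have := abs_log_mul_self_rpow_lt x δ hx0 hx1 hδ
      rw [abs_mul, abs_of_nonneg (rpow_nonneg hx _), mul_comm, one_div] at this
      linarith [rpow_nonneg hK (δ + 1)]
  · have hlog : |log x| ≤ K := by
      rw [abs_of_nonneg (log_nonneg hx1)]
      linarith [log_le_sub_one_of_pos (by linarith : 0 < x)]
    calc x ^ δ * |log x| ≤ K ^ δ * K := by gcongr
      _ = K ^ (δ + 1) := (rpow_add_one (by linarith) δ).symm
      _ ≤ δ⁻¹ + K ^ (δ + 1) := le_add_of_nonneg_left (inv_pos.mpr hδ).le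

theorem rpow_mul_abs_log_le_mul_rpow {x K p β ε Δ : ℝ} (hx : 0 ≤ x) (hxK : x ≤ K) (hK : 1 ≤ K)
    (hε : 0 < ε) (hpβ : p + ε ≤ β) (hβp : β ≤ p + Δ) :
    x ^ β * |log x| ≤ (ε⁻¹ + K ^ (Δ + 1)) * x ^ p := by
  rcases hx.eq_or_lt with rfl | hx0
  · simp only [log_zero, abs_zero, mul_zero]
    exact mul_nonneg (by positivity) (rpow_nonneg le_rfl _)
  have hδ : 0 < β - p := by linarith
  calc x ^ β * |log x| = x ^ (β - p) * |log x| * x ^ p := by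
        rw [mul_right_comm, ← rpow_add hx0, sub_add_cancel]
    _ ≤ ((β - p)⁻¹ + K ^ (β - p + 1)) * x ^ p := by
        gcongr
        exact rpow_mul_abs_log_le_inv_add_rpow hx hxK hδ
    _ ≤ (ε⁻¹ + K ^ (Δ + 1)) * x ^ p := by
        gcongr <;> linarith

theorem hasDerivAt_rpow_mul_log {β x : ℝ} (hx : 0 < x) :
    HasDerivAt (fun y => y ^ β * log y) (x ^ (β - 1) * (β * log x + 1)) x := by
  refine ((hasDerivAt_rpow_const (p := β) (Or.inl hx.ne')).mul
    (hasDerivAt_log hx.ne')).congr_deriv ?_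
  rw [rpow_sub_one hx.ne']
  field_simp

theorem abs_rpow_sub_one_mul_log_add_one_le {β ε B c x γ : ℝ} (hc : 1 ≤ c) (hcx : c ≤ x)
    (hε : 0 < ε) (hB : |β| ≤ B) (hγ : β + ε - 1 ≤ γ) (hγ0 : γ ≤ 0) :
    |x ^ (β - 1) * (β * log x + 1)| ≤ (B / ε + 1) * c ^ γ := by
  have hx : 1 ≤ x := hc.trans hcx
  have hx0 : 0 < x := by linarith
  have hlog : 0 ≤ log x := log_nonneg hx
  have hB0 : 0 ≤ B := (abs_nonneg β).trans hB
  have hxε : 1 ≤ x ^ ε := one_le_rpow hx hε.le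
  have hfactor : |β * log x + 1| ≤ (B / ε + 1) * x ^ ε := by
    calc |β * log x + 1| ≤ B * log x + 1 := by
          refine (abs_add_le _ _).trans ?_
          rw [abs_mul, abs_of_nonneg hlog, abs_one]
          gcongr
      _ ≤ B * (x ^ ε / ε) + x ^ ε := by
          gcongr
          exact log_le_rpow_div hx0.le hε
      _ = (B / ε + 1) * x ^ ε := by ring
  calc |x ^ (β - 1) * (β * log x + 1)| ≤ x ^ (β - 1) * ((B / ε + 1) * x ^ ε) := by
        rw [abs_mul, abs_of_nonneg (rpow_nonneg hx0.le _)]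
        gcongr
    _ = (B / ε + 1) * x ^ (β + ε - 1) := by
        rw [mul_left_comm, ← rpow_add hx0, sub_add_eq_add_sub]
    _ ≤ (B / ε + 1) * x ^ γ := by gcongr
    _ ≤ (B / ε + 1) * c ^ γ := by
        have : 0 ≤ B / ε := div_nonneg hB0 hε.le
        exact mul_le_mul_of_nonneg_left (rpow_le_rpow_of_nonpos (by linarith) hcx hγ0)
          (by linarith)

theorem abs_rpow_mul_log_sub_rpow_mul_log_le {β ε B c x y γ : ℝ} (hc : 1 ≤ c) (hcx : c ≤ x)
    (hcy : c ≤ y) (hε : 0 < ε) (hB : |β| ≤ B) (hγ : β + ε - 1 ≤ γ) (hγ0 : γ ≤ 0) :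
    |x ^ β * log x - y ^ β * log y| ≤ (B / ε + 1) * c ^ γ * |x - y| := by
  have hderiv : ∀ z ∈ Ici c, HasDerivWithinAt (fun z => z ^ β * log z)
      (z ^ (β - 1) * (β * log z + 1)) (Ici c) z := fun z hz =>
    (hasDerivAt_rpow_mul_log (by linarith [mem_Ici.mp hz])).hasDerivWithinAt
  exact (convex_Ici c).norm_image_sub_le_of_norm_hasDerivWithin_le hderiv
    (fun z hz => abs_rpow_sub_one_mul_log_add_one_le hc hz hε hB hγ hγ0) hcy hcx

theorem abs_phiKer_le_of_near {α t s η p ε Δ K : ℝ} (hts : |t - s| ≤ K) (hs : |s| ≤ K)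
    (hK : 1 ≤ K) (hε : 0 < ε) (hpη : p + ε ≤ η - 1 / α) (hηp : η - 1 / α ≤ p + Δ) :
    |phiKer α t s η| ≤ (ε⁻¹ + K ^ (Δ + 1)) * (|t - s| ^ p + |s| ^ p) := by
  have hterm : ∀ x : ℝ, |x| ≤ K →
      |(|x| ^ (η - 1 / α) * log |x|)| ≤ (ε⁻¹ + K ^ (Δ + 1)) * |x| ^ p := fun x hx => by
    rw [abs_mul, abs_of_nonneg (rpow_nonneg (abs_nonneg x) _)]
    exact rpow_mul_abs_log_le_mul_rpow (abs_nonneg x) hx hK hε hpη hηp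
  rw [mul_add]
  exact (abs_sub _ _).trans (add_le_add (hterm _ hts) (hterm _ hs))

theorem abs_phiKer_le_of_far {α t s η ε B q R : ℝ} (ht : |t| ≤ R) (hs : 2 * R + 3 < |s|)
    (hε : 0 < ε) (hB : |η - 1 / α| ≤ B) (hηq : η - 1 / α + ε - 1 ≤ q) (hq : q ≤ 0) :
    |phiKer α t s η| ≤ R * (B / ε + 1) / 4 ^ q * (1 + |s|) ^ q := by
  have hR : 0 ≤ R := (abs_nonneg t).trans ht
  have hc : 1 ≤ (1 + |s|) / 4 := by linarith
  have hcs : (1 + |s|) / 4 ≤ |s| := by linarith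
  have hcts : (1 + |s|) / 4 ≤ |t - s| := by
    have := abs_sub_abs_le_abs_sub s t
    rw [abs_sub_comm s t] at this
    linarith
  have hdiff : |(|t - s| - |s|)| ≤ R := by
    have := abs_abs_sub_abs_le_abs_sub (t - s) (-s)
    rw [abs_neg, sub_neg_eq_add, sub_add_cancel] at this
    exact this.trans ht
  have hB0 : 0 ≤ B / ε + 1 := by
    have := div_nonneg ((abs_nonneg _).trans hB) hε.le
    linarith
  calc |phiKer α t s η| ≤ (B / ε + 1) * ((1 + |s|) / 4) ^ q * |(|t - s| - |s|)| :=
        abs_rpow_mul_log_sub_rpow_mul_log_le hc hcts hcs hε hB hηq hq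
    _ ≤ (B / ε + 1) * ((1 + |s|) / 4) ^ q * R := by gcongr
    _ = R * (B / ε + 1) / 4 ^ q * (1 + |s|) ^ q := by
        rw [div_rpow (by positivity) (by norm_num)]
        ring

theorem memLp_indicator_ball_abs_rpow {p r : ℝ} (hp : 0 < p) (hrp : -1 < r * p) (K : ℝ) :
    MemLp ((Metric.ball (0 : ℝ) K).indicator fun u => |u| ^ r) (ENNReal.ofReal p) := by
  rw [memLp_indicator_iff_restrict measurableSet_ball,
    ← integrable_norm_rpow_iff (Measurable.aestronglyMeasurable (by fun_prop))
      (by simpa using hp) ENNReal.ofReal_ne_top, ENNReal.toReal_ofReal hp.le]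
  refine integrableOn_ball_of_norm_le_rpow (by simp) (α := -(r * p)) (C := 1)
    (by rw [Module.finrank_self, Nat.cast_one]; linarith)
    (Filter.Eventually.of_forall fun u => ?_) (Measurable.aestronglyMeasurable (by fun_prop))
  rw [neg_neg, one_mul, Real.norm_eq_abs, Real.norm_eq_abs, Real.norm_eq_abs,
    abs_of_nonneg (by positivity), abs_of_nonneg (by positivity), ← rpow_mul (abs_nonneg u)]

theorem memLp_one_add_abs_rpow {p r : ℝ} (hp : 0 < p) (hrp : r * p < -1) :
    MemLp (fun u : ℝ => (1 + |u|) ^ r) (ENNReal.ofReal p) := by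
  rw [← integrable_norm_rpow_iff (Measurable.aestronglyMeasurable (by fun_prop))
    (by simpa using hp) ENNReal.ofReal_ne_top, ENNReal.toReal_ofReal hp.le]
  refine (integrable_one_add_norm (E := ℝ) (μ := volume) (r := -(r * p))
    (by rw [Module.finrank_self, Nat.cast_one]; linarith)).congr
      (Filter.Eventually.of_forall fun u => ?_)
  have : 0 ≤ 1 + |u| := by positivity
  simp only [neg_neg, Real.norm_eq_abs, abs_of_nonneg (rpow_nonneg this _), ← rpow_mul this]

theorem lintegral_rpow_le_of_le_comp_sub_add {G : ℝ → ℝ} {F : ℝ → ℝ≥0∞} {p : ℝ} (hp : 0 < p)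
    (hG : AEStronglyMeasurable G) (t : ℝ) (hF : ∀ s, F s ≤ ‖G (t - s) + G s‖ₑ) :
    ∫⁻ s, F s ^ p ≤
      (ENNReal.LpAddConst (ENNReal.ofReal p) * (2 * eLpNorm G (ENNReal.ofReal p))) ^ p := by
  have hGt : AEStronglyMeasurable (fun s => G (t - s)) :=
    hG.comp_measurePreserving (Measure.measurePreserving_sub_left volume t)
  have hshift : eLpNorm (fun s => G (t - s)) (ENNReal.ofReal p) = eLpNorm G (ENNReal.ofReal p) :=
    eLpNorm_comp_measurePreserving hG (Measure.measurePreserving_sub_left volume t)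
  calc ∫⁻ s, F s ^ p ≤ ∫⁻ s, ‖G (t - s) + G s‖ₑ ^ p :=
        lintegral_mono fun s => ENNReal.rpow_le_rpow (hF s) hp.le
    _ = eLpNorm (fun s => G (t - s) + G s) (ENNReal.ofReal p) volume ^ p := by
        rw [eLpNorm_eq_eLpNorm' (by simpa using hp) ENNReal.ofReal_ne_top,
          ENNReal.toReal_ofReal hp.le, lintegral_rpow_enorm_eq_rpow_eLpNorm' hp]
    _ ≤ (ENNReal.LpAddConst (ENNReal.ofReal p) *
          (eLpNorm (fun s => G (t - s)) (ENNReal.ofReal p) volume +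
            eLpNorm G (ENNReal.ofReal p) volume)) ^ p :=
        ENNReal.rpow_le_rpow (eLpNorm_add_le' hGt hG _) hp.le
    _ = (ENNReal.LpAddConst (ENNReal.ofReal p) * (2 * eLpNorm G (ENNReal.ofReal p) volume)) ^ p :=
        by rw [hshift, two_mul]

theorem exists_memLp_abs_phiKer_le {α hlo hhi R : ℝ} (hα : 0 < α) (hm : 0 < hlo) (hp : hhi < 1)
    (hR : 0 ≤ R) :
    ∃ G : ℝ → ℝ, MemLp G (ENNReal.ofReal α) ∧
      ∀ t s η, |t| ≤ R → η ∈ Icc hlo hhi → |phiKer α t s η| ≤ G (t - s) + G s := by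
  set K := 3 * R + 4
  set p := hlo / 2 - 1 / α with hpdef
  set q := (hhi - 1) / 2 - 1 / α with hqdef
  set D := (hlo / 2)⁻¹ + K ^ (hhi - hlo / 2 + 1)
  set E := R * ((1 + 1 / α) / ((1 - hhi) / 2) + 1) / 4 ^ q
  set near : ℝ → ℝ := (Metric.ball 0 K).indicator fun u => |u| ^ p
  have hD : 0 ≤ D := by positivity
  have hE : 0 ≤ E := by
    have : 0 ≤ (1 + 1 / α) / ((1 - hhi) / 2) := div_nonneg (by positivity) (by linarith)
    positivity
  have hnear : ∀ u, 0 ≤ D * near u :=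
    fun u => mul_nonneg hD (indicator_nonneg (fun u _ => by positivity) u)
  have hfar : ∀ u : ℝ, 0 ≤ E * (1 + |u|) ^ q := fun u => by positivity
  refine ⟨fun u => D * near u + E * (1 + |u|) ^ q, ?_, fun t s η ht hη => ?_⟩
  · refine ((memLp_indicator_ball_abs_rpow hα ?_ K).const_mul D).add
      ((memLp_one_add_abs_rpow hα ?_).const_mul E)
    · have : p * α = α * hlo / 2 - 1 := by rw [hpdef]; field_simp
      nlinarith
    · have : q * α = α * (hhi - 1) / 2 - 1 := by rw [hqdef]; field_simp
      nlinarith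
  obtain ⟨hη1, hη2⟩ := hη
  dsimp only
  rcases le_or_gt |s| (2 * R + 3) with hs | hs
  · have hts : |t - s| < K := by linarith [abs_sub t s]
    have hsK : |s| < K := by linarith
    have hφ : |phiKer α t s η| ≤ D * (|t - s| ^ p + |s| ^ p) :=
      abs_phiKer_le_of_near hts.le hsK.le (by linarith) (by positivity) (by linarith)
        (by linarith)
    have hmem : ∀ u : ℝ, |u| < K → near u = |u| ^ p := fun u hu =>
      indicator_of_mem (by rwa [Metric.mem_ball, dist_zero_right, Real.norm_eq_abs]) _
    rw [hmem _ hts, hmem _ hsK]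
    linarith [hfar (t - s), hfar s]
  · have hα' : 0 < 1 / α := by positivity
    have hB : |η - 1 / α| ≤ 1 + 1 / α := abs_le.mpr ⟨by linarith, by linarith⟩
    have hφ : |phiKer α t s η| ≤ E * (1 + |s|) ^ q :=
      abs_phiKer_le_of_far ht hs (by linarith) hB (by linarith) (by linarith)
    linarith [hnear (t - s), hnear s, hfar (t - s)]

theorem uniform_Lalpha_domination_of_derivative_kernel_general
    (α hlo hhi : ℝ) (hα : 0 < α)
    (hm : 0 < hlo) (hp : hhi < 1)
    (U : Set ℝ) (hU : IsCompact U) :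
    (⨆ t ∈ U, ∫⁻ s : ℝ,
        (⨆ η ∈ Set.Icc hlo hhi, ENNReal.ofReal |phiKer α t s η|) ^ α) < ⊤ := by
  obtain ⟨R, hR, hUR⟩ := hU.isBounded.exists_pos_norm_le
  obtain ⟨G, hG, hdom⟩ := exists_memLp_abs_phiKer_le hα hm hp hR.le
  have hbound : (ENNReal.LpAddConst (ENNReal.ofReal α) * (2 * eLpNorm G (ENNReal.ofReal α))) ^ α
      < ⊤ :=
    ENNReal.rpow_lt_top_of_nonneg hα.le (ENNReal.mul_ne_top (ENNReal.LpAddConst_lt_top _).ne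
      (ENNReal.mul_ne_top ENNReal.ofNat_ne_top hG.eLpNorm_ne_top))
  refine lt_of_le_of_lt (iSup₂_le fun t ht => ?_) hbound
  refine lintegral_rpow_le_of_le_comp_sub_add hα hG.aestronglyMeasurable t fun s => ?_
  refine iSup₂_le fun η hη => ?_
  rw [Real.enorm_eq_ofReal_abs]
  exact ENNReal.ofReal_le_ofReal ((hdom t s η (hUR t ht) hη).trans (le_abs_self _))

theorem uniform_Lalpha_domination_of_derivative_kernel
    (α hlo hhi : ℝ) (hα : 0 < α) (hα2 : α ≤ 2)
    (hm : 0 < hlo) (hmm : hlo ≤ hhi) (hp : hhi < 1)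
    (U : Set ℝ) (hU : IsCompact U) :
    (⨆ t ∈ U, ∫⁻ s : ℝ,
        (⨆ η ∈ Set.Icc hlo hhi, ENNReal.ofReal |phiKer α t s η|) ^ α) < ⊤ :=
  uniform_Lalpha_domination_of_derivative_kernel_general α hlo hhi hα hm hp U hU
end

section
/- Let β ∈ (−1/2, 0) and M₁ > 0. Let (Ω, P) be a probability space and let X, Y : Ω → ℝ be random variables whose laws are the Gaussian measures N(0, σ₁²) and N(0, σ₂²), respectively, with σ₁ ≥ M₁ and σ₂ ≥ M₁. Then |X|^β, |Y|^β and |X|^β |Y|^β are integrable, and |E[|X|^β |Y|^β] − E[|X|^β] E[|Y|^β]| ≤ 2 · M₁^{2β} · 2^{β} Γ(β + 1/2) / √π. -/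
/-!
For `s > -1` the absolute moments of a centred Gaussian are explicit,
`∫ |x|^s d𝒩(0, v) = v^(s/2) 2^(s/2) Γ((s+1)/2) / √π`, so `|X|^β` and `|Y|^β` lie in `L²` with
second moments at most `M₁^(2β) 2^β Γ(β + 1/2) / √π` (as `β < 0` and both standard deviations are
at least `M₁`). For nonnegative `f, g ∈ L²`, Cauchy–Schwarz puts both `E[fg]` and `E[f] E[g]` in
`[0, ‖f‖₂ ‖g‖₂]`, and hence bounds their difference by `‖f‖₂ ‖g‖₂` as well.
-/

open MeasureTheory ProbabilityTheory Real
open scoped NNReal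

theorem integral_abs_rpow_gaussianReal {v : ℝ≥0} (hv : v ≠ 0) {s : ℝ} (hs : -1 < s) :
    ∫ x, |x| ^ s ∂gaussianReal 0 v = v ^ (s / 2) * (2 ^ (s / 2) * Gamma ((s + 1) / 2) / √π) := by
  set b : ℝ := (2 * v)⁻¹
  have hdensity : ∀ x : ℝ, gaussianPDFReal 0 v x • |x| ^ s
      = (√(2 * π * v))⁻¹ * (|x| ^ s * rexp (-b * |x| ^ (2 : ℝ))) := by
    intro x
    rw [gaussianPDFReal, rpow_two, sq_abs, smul_eq_mul, sub_zero]
    simp only [b]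
    ring_nf
  have hsqrt : √(2 * π * v) = √(2 * v) * √π := by
    rw [mul_right_comm, sqrt_mul (by positivity)]
  have hb : b ^ (-(s + 1) / 2) = (2 : ℝ) ^ (s / 2) * v ^ (s / 2) * √(2 * v) := by
    rw [inv_rpow (by positivity), ← rpow_neg (by positivity), sqrt_eq_rpow,
      ← mul_rpow (by positivity) (by positivity), ← rpow_add (by positivity)]
    ring_nf
  rw [integral_gaussianReal_eq_integral_smul hv, integral_congr_ae (ae_of_all _ hdensity),
    integral_comp_abs (f := fun t => (√(2 * π * v))⁻¹ * (t ^ s * rexp (-b * t ^ (2 : ℝ)))),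
    integral_const_mul, integral_rpow_mul_exp_neg_mul_rpow two_pos hs (by positivity), hb, hsqrt]
  field_simp

theorem integrable_abs_rpow_gaussianReal {v : ℝ≥0} (hv : v ≠ 0) {s : ℝ} (hs : -1 < s) :
    Integrable (fun x : ℝ => |x| ^ s) (gaussianReal 0 v) := by
  -- a non-integrable function has integral `0`, but this moment is positive
  refine Integrable.of_integral_ne_zero ?_
  rw [integral_abs_rpow_gaussianReal hv hs]
  have hΓ : 0 < Gamma ((s + 1) / 2) := Gamma_pos_of_pos (by linarith)
  positivity

theorem abs_rpow_sq (x β : ℝ) : (|x| ^ β) ^ 2 = |x| ^ (2 * β) := by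
  rw [← rpow_natCast, ← rpow_mul (abs_nonneg x), mul_comm, Nat.cast_ofNat]

theorem coe_toNNReal_sq_rpow_le {M σ β : ℝ} (hM : 0 < M) (hσ : M ≤ σ) (hβ : β ≤ 0) :
    ((σ ^ 2).toNNReal : ℝ) ^ β ≤ M ^ (2 * β) := by
  rw [coe_toNNReal _ (sq_nonneg σ), ← rpow_natCast, ← rpow_mul (hM.le.trans hσ), Nat.cast_ofNat]
  exact rpow_le_rpow_of_nonpos hM hσ (by linarith)

section GaussianLaw

variable {Ω : Type*} [MeasurableSpace Ω] {P : Measure Ω} {X : Ω → ℝ} {v : ℝ≥0} {β : ℝ}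

theorem memLp_two_abs_rpow_of_map_eq_gaussianReal (hX : Measurable X)
    (hlaw : P.map X = gaussianReal 0 v) (hv : v ≠ 0) (hβ : -1 / 2 < β) :
    MemLp (fun ω => |X ω| ^ β) 2 P := by
  have hmeas : Measurable fun x : ℝ => |x| ^ (2 * β) := by fun_prop
  refine (memLp_two_iff_integrable_sq
    (by fun_prop : Measurable fun ω => |X ω| ^ β).aestronglyMeasurable).mpr ?_
  have h := integrable_abs_rpow_gaussianReal hv (s := 2 * β) (by linarith)
  rw [← hlaw, integrable_map_measure hmeas.aestronglyMeasurable hX.aemeasurable] at h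
  simpa only [abs_rpow_sq, Function.comp_def] using h

theorem integral_sq_abs_rpow_of_map_eq_gaussianReal (hX : Measurable X)
    (hlaw : P.map X = gaussianReal 0 v) (hv : v ≠ 0) (hβ : -1 / 2 < β) :
    ∫ ω, (|X ω| ^ β) ^ 2 ∂P = v ^ β * (2 ^ β * Gamma (β + 1 / 2) / √π) := by
  have hmeas : Measurable fun x : ℝ => |x| ^ (2 * β) := by fun_prop
  have h := integral_abs_rpow_gaussianReal hv (s := 2 * β) (by linarith)
  rw [← hlaw, integral_map hX.aemeasurable hmeas.aestronglyMeasurable,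
    mul_div_cancel_left₀ β two_ne_zero, show (2 * β + 1) / 2 = β + 1 / 2 by ring] at h
  simpa only [abs_rpow_sq] using h

end GaussianLaw

section CauchySchwarz

variable {Ω : Type*} [MeasurableSpace Ω] {μ : Measure Ω} {f g : Ω → ℝ}

theorem integral_mul_le_sqrt_mul_sqrt_of_nonneg (hf₀ : 0 ≤ᵐ[μ] f) (hg₀ : 0 ≤ᵐ[μ] g)
    (hf : MemLp f 2 μ) (hg : MemLp g 2 μ) :
    ∫ ω, f ω * g ω ∂μ ≤ √(∫ ω, f ω ^ 2 ∂μ) * √(∫ ω, g ω ^ 2 ∂μ) := by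
  have h := integral_mul_le_Lp_mul_Lq_of_nonneg Real.HolderConjugate.two_two hf₀ hg₀
    (by simpa using hf) (by simpa using hg)
  simpa only [rpow_two, sqrt_eq_rpow, one_div] using h

variable [IsProbabilityMeasure μ]

theorem integral_le_sqrt_integral_sq_of_nonneg (hf₀ : 0 ≤ᵐ[μ] f) (hf : MemLp f 2 μ) :
    ∫ ω, f ω ∂μ ≤ √(∫ ω, f ω ^ 2 ∂μ) := by
  simpa using integral_mul_le_sqrt_mul_sqrt_of_nonneg hf₀ (ae_of_all μ fun _ => zero_le_one) hf
    (memLp_const 1)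

theorem abs_integral_mul_sub_integral_mul_integral_le_of_nonneg (hf₀ : 0 ≤ᵐ[μ] f)
    (hg₀ : 0 ≤ᵐ[μ] g) (hf : MemLp f 2 μ) (hg : MemLp g 2 μ) :
    |∫ ω, f ω * g ω ∂μ - (∫ ω, f ω ∂μ) * ∫ ω, g ω ∂μ|
      ≤ √(∫ ω, f ω ^ 2 ∂μ) * √(∫ ω, g ω ^ 2 ∂μ) := by
  have hfg₀ : 0 ≤ ∫ ω, f ω * g ω ∂μ :=
    integral_nonneg_of_ae (by filter_upwards [hf₀, hg₀] with ω hfω hgω using mul_nonneg hfω hgω)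
  have hf_int₀ : 0 ≤ ∫ ω, f ω ∂μ := integral_nonneg_of_ae hf₀
  have hg_int₀ : 0 ≤ ∫ ω, g ω ∂μ := integral_nonneg_of_ae hg₀
  have hfg := integral_mul_le_sqrt_mul_sqrt_of_nonneg hf₀ hg₀ hf hg
  have hf_g := mul_le_mul (integral_le_sqrt_integral_sq_of_nonneg hf₀ hf)
    (integral_le_sqrt_integral_sq_of_nonneg hg₀ hg) hg_int₀ (sqrt_nonneg _)
  rw [abs_sub_le_iff]
  constructor <;> nlinarith [mul_nonneg hf_int₀ hg_int₀]

end CauchySchwarz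

theorem gaussian_covariance_bound_negative_powers
    (β : ℝ) (hβ : β ∈ Set.Ioo (-(1 : ℝ) / 2) 0) (M₁ : ℝ) (hM₁ : 0 < M₁)
    (σ₁ σ₂ : ℝ) (hσ₁ : M₁ ≤ σ₁) (hσ₂ : M₁ ≤ σ₂)
    (Ω : Type) [MeasurableSpace Ω] (P : Measure Ω) [IsProbabilityMeasure P]
    (X Y : Ω → ℝ) (hX : Measurable X) (hY : Measurable Y)
    (hlawX : P.map X = gaussianReal 0 (σ₁ ^ 2).toNNReal)
    (hlawY : P.map Y = gaussianReal 0 (σ₂ ^ 2).toNNReal) :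
    Integrable (fun ω => |X ω| ^ β) P ∧
      Integrable (fun ω => |Y ω| ^ β) P ∧
      Integrable (fun ω => |X ω| ^ β * |Y ω| ^ β) P ∧
      |(∫ ω, |X ω| ^ β * |Y ω| ^ β ∂P)
          - (∫ ω, |X ω| ^ β ∂P) * (∫ ω, |Y ω| ^ β ∂P)|
        ≤ 2 * M₁ ^ (2 * β) * (2 ^ β * Real.Gamma (β + 1 / 2) / Real.sqrt π) := by
  obtain ⟨hβ_gt, hβ_lt⟩ := hβ
  have hc : 0 ≤ 2 ^ β * Real.Gamma (β + 1 / 2) / Real.sqrt π := by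
    have := Gamma_pos_of_pos (by linarith : 0 < β + 1 / 2)
    positivity
  set K := M₁ ^ (2 * β) * (2 ^ β * Real.Gamma (β + 1 / 2) / Real.sqrt π)
  have hK : 0 ≤ K := by positivity
  have second_moment : ∀ {σ : ℝ} {Z : Ω → ℝ}, M₁ ≤ σ → Measurable Z →
      P.map Z = gaussianReal 0 (σ ^ 2).toNNReal →
      MemLp (fun ω => |Z ω| ^ β) 2 P ∧ ∫ ω, (|Z ω| ^ β) ^ 2 ∂P ≤ K := by
    intro σ Z hσ hZ hlaw
    have hv : (σ ^ 2).toNNReal ≠ 0 := (toNNReal_pos.mpr (pow_pos (hM₁.trans_le hσ) 2)).ne'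
    refine ⟨memLp_two_abs_rpow_of_map_eq_gaussianReal hZ hlaw hv hβ_gt, ?_⟩
    rw [integral_sq_abs_rpow_of_map_eq_gaussianReal hZ hlaw hv hβ_gt]
    exact mul_le_mul_of_nonneg_right (coe_toNNReal_sq_rpow_le hM₁ hσ hβ_lt.le) hc
  obtain ⟨hXL2, hXmom⟩ := second_moment hσ₁ hX hlawX
  obtain ⟨hYL2, hYmom⟩ := second_moment hσ₂ hY hlawY
  refine ⟨hXL2.integrable one_le_two, hYL2.integrable one_le_two, hXL2.integrable_mul hYL2, ?_⟩
  have hnonneg : ∀ Z : Ω → ℝ, 0 ≤ᵐ[P] fun ω => |Z ω| ^ β :=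
    fun Z => ae_of_all P fun ω => rpow_nonneg (abs_nonneg (Z ω)) β
  calc _ ≤ √(∫ ω, (|X ω| ^ β) ^ 2 ∂P) * √(∫ ω, (|Y ω| ^ β) ^ 2 ∂P) :=
        abs_integral_mul_sub_integral_mul_integral_le_of_nonneg (hnonneg X) (hnonneg Y) hXL2 hYL2
    _ ≤ √K * √K := by gcongr
    _ = K := mul_self_sqrt hK
    _ ≤ 2 * K := by linarith
    _ = _ := by ring
end

section
/- Let K ≥ 1 and L ≥ 1 be integers and let a = (a_0, …, a_K) be real numbers with L vanishing moments: ∑_{k=0}^{K} k^q a_k = 0 for all q ∈ {0, …, L} (with 0^0 = 1) and ∑_{k=0}^{K} k^{L+1} a_k ≠ 0. Let 0 < α ≤ 2 and H₀ ∈ (0,1). Then there exist a constant C > 0 and an integer K₀ ≥ 1 such that for every m ∈ ℤ with |m| ≥ K₀: ∫_ℝ | ∑_{p=0}^{K} a_p |p − s|^{H₀ − 1/α} |^{α/2} · | ∑_{p'=0}^{K} a_{p'} |p' − s − m|^{H₀ − 1/α} |^{α/2} ds ≤ C · |m|^{α(H₀ − (L+1))/2}. -/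
/-!
For `t ≠ 0` the kernel `∑ a_p |p - t|^H` equals `|t|^H ∑ a_p ψ(p/t)` with `ψ x = |1 - x|^H`
smooth near `0`. The `L + 1` vanishing moments annihilate the Taylor polynomial of degree `L` of
`ψ`, so the kernel is `O(|t|^(H - L - 1))` at infinity, and `g = |kernel|^(α/2)` is
`O(|t|^δ)` with `δ = α(H₀ - L - 1)/2 - 1/2 < -1/2`. Near the points `p`, `g` is dominated by
`∑ |a_p|^(α/2) |p - t|^((αH₀ - 1)/2)` (subadditivity of `x ↦ x^(α/2)`), hence locally integrable.

In `∫ g(s) g(s + m) ds`, for `|s| ≤ 2|m|` one of `s`, `s + m` has modulus at least `|m|/2`, so the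
integrand is at most `C |m|^δ (g(s) + g(s + m))`, and `∫_{|u| ≤ 3|m|} g = O(|m|^(1/2))` because
`δ ≤ -1/2`. For `|s| > 2|m|` the integrand is `O(|s|^(2δ))`, whose integral is
`O(|m|^(2δ + 1))`. Both parts are `O(|m|^(δ + 1/2)) = O(|m|^(α(H₀ - L - 1)/2))`.
-/

open MeasureTheory Set Filter Asymptotics Topology Bornology
open scoped ENNReal

theorem taylorWithinEval_sub_isBigO {E : Type*} [NormedAddCommGroup E] [NormedSpace ℝ E]
    {f : ℝ → E} {x₀ : ℝ} {n : ℕ} {s : Set ℝ} (hs : Convex ℝ s) (hx₀s : x₀ ∈ s)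
    (hf : ContDiffOn ℝ (n + 1) f s) :
    (fun x ↦ f x - taylorWithinEval f n s x₀ x) =O[𝓝[s] x₀] fun x ↦ (x - x₀) ^ (n + 1) := by
  have hlast : (fun x ↦ (((n + 1 : ℝ) * n.factorial)⁻¹ * (x - x₀) ^ (n + 1)) •
      iteratedDerivWithin (n + 1) f s x₀) =O[𝓝[s] x₀] fun x ↦ (x - x₀) ^ (n + 1) :=
    isBigO_of_le' (c := ((n + 1 : ℝ) * n.factorial)⁻¹ * ‖iteratedDerivWithin (n + 1) f s x₀‖)
      _ fun x ↦ by
        rw [norm_smul, norm_mul, norm_inv, Real.norm_of_nonneg (by positivity)]; ring_nf; rfl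
  refine ((taylor_isLittleO hs hx₀s (by exact_mod_cast hf)).isBigO.add hlast).congr_left fun x ↦ ?_
  rw [taylorWithinEval_succ]
  abel

section Moments

variable {K L : ℕ} {a : ℕ → ℝ}

theorem sum_mul_taylorWithinEval_mul_eq_zero
    (hmom : ∀ q ≤ L, ∑ k ∈ Finset.range (K + 1), (k : ℝ) ^ q * a k = 0)
    (f : ℝ → ℝ) (s : Set ℝ) (y : ℝ) :
    ∑ p ∈ Finset.range (K + 1), a p * taylorWithinEval f L s 0 (p * y) = 0 := by
  simp_rw [taylor_within_apply, Finset.mul_sum]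
  rw [Finset.sum_comm]
  refine Finset.sum_eq_zero fun q hq ↦ ?_
  have hqL : q ≤ L := Nat.lt_succ_iff.mp (Finset.mem_range.mp hq)
  calc ∑ p ∈ Finset.range (K + 1), a p *
        (((q.factorial : ℝ)⁻¹ * (p * y - 0) ^ q) • iteratedDerivWithin q f s 0)
      = ((q.factorial : ℝ)⁻¹ * y ^ q * iteratedDerivWithin q f s 0) *
          ∑ p ∈ Finset.range (K + 1), (p : ℝ) ^ q * a p := by
        rw [Finset.mul_sum]
        refine Finset.sum_congr rfl fun p _ ↦ ?_
        rw [smul_eq_mul, sub_zero, mul_pow]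
        ring
    _ = 0 := by rw [hmom q hqL, mul_zero]

theorem isBigO_sum_mul_comp_mul
    (hmom : ∀ q ≤ L, ∑ k ∈ Finset.range (K + 1), (k : ℝ) ^ q * a k = 0)
    {ψ : ℝ → ℝ} {s : Set ℝ} (hs : Convex ℝ s) (hs₀ : s ∈ 𝓝 0)
    (hψ : ContDiffOn ℝ (L + 1) ψ s) :
    (fun y ↦ ∑ p ∈ Finset.range (K + 1), a p * ψ (p * y)) =O[𝓝 0] fun y ↦ y ^ (L + 1) := by
  have hrem := taylorWithinEval_sub_isBigO hs (mem_of_mem_nhds hs₀) hψ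
  rw [nhdsWithin_eq_nhds.2 hs₀] at hrem
  have hterm : ∀ p ∈ Finset.range (K + 1), (fun y ↦ a p *
      (ψ (p * y) - taylorWithinEval ψ L s 0 (p * y))) =O[𝓝 0] fun y ↦ y ^ (L + 1) := by
    intro p _
    have hp : Tendsto (fun y : ℝ ↦ (p : ℝ) * y) (𝓝 0) (𝓝 0) := by
      simpa using (tendsto_id (x := 𝓝 (0 : ℝ))).const_mul (p : ℝ)
    refine ((hrem.comp_tendsto hp).trans ?_).const_mul_left (a p)
    simpa [Function.comp_def, mul_pow] using
      (isBigO_refl (fun y : ℝ ↦ y ^ (L + 1)) (𝓝 0)).const_mul_left ((p : ℝ) ^ (L + 1))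
  refine (IsBigO.sum hterm).congr_left fun y ↦ ?_
  simp only [Finset.sum_apply, mul_sub, Finset.sum_sub_distrib,
    sum_mul_taylorWithinEval_mul_eq_zero hmom, sub_zero]

theorem isBigO_sum_mul_abs_sub_rpow
    (hmom : ∀ q ≤ L, ∑ k ∈ Finset.range (K + 1), (k : ℝ) ^ q * a k = 0) (H : ℝ) :
    (fun t : ℝ ↦ ∑ p ∈ Finset.range (K + 1), a p * |(p : ℝ) - t| ^ H)
      =O[cobounded ℝ] fun t ↦ |t| ^ (H - (L + 1)) := by
  have hψ : ContDiffOn ℝ (L + 1) (fun x : ℝ ↦ |1 - x| ^ H) (Iio 1) :=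
    ((contDiffOn_const.sub contDiffOn_id).rpow_const_of_ne (p := H)
      fun x (hx : x < 1) ↦ (sub_pos.2 hx).ne').congr fun x (hx : x < 1) ↦ by
        rw [abs_of_pos (sub_pos.2 hx)]; rfl
  have hmoments := (isBigO_sum_mul_comp_mul hmom (convex_Iio 1) (Iio_mem_nhds one_pos)
    hψ).comp_tendsto tendsto_inv₀_cobounded
  have hfactor : ∀ t : ℝ, t ≠ 0 → ∑ p ∈ Finset.range (K + 1), a p * |(p : ℝ) - t| ^ H
      = |t| ^ H * ∑ p ∈ Finset.range (K + 1), a p * |1 - p * t⁻¹| ^ H := by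
    intro t ht
    rw [Finset.mul_sum]
    refine Finset.sum_congr rfl fun p _ ↦ ?_
    have : |(p : ℝ) - t| = |t| * |1 - p * t⁻¹| := by
      rw [abs_sub_comm, ← abs_mul, mul_sub, mul_one, mul_left_comm, mul_inv_cancel₀ ht, mul_one]
    rw [this, Real.mul_rpow (abs_nonneg _) (abs_nonneg _)]
    ring
  have hne : ∀ᶠ t in cobounded ℝ, t ≠ 0 :=
    (tendsto_norm_cobounded_atTop.eventually_gt_atTop 0).mono fun t ht ↦ norm_pos_iff.mp ht
  refine (((isBigO_refl (fun t : ℝ ↦ |t| ^ H) _).mul hmoments).congr' ?_ .rfl).norm_right.congr'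
    .rfl ?_
  · filter_upwards [hne] with t ht using (hfactor t ht).symm
  · filter_upwards [hne] with t ht
    have ht' : 0 < |t| := abs_pos.mpr ht
    rw [Function.comp_apply, norm_mul, norm_pow, norm_inv, Real.norm_eq_abs, Real.norm_eq_abs,
      abs_of_nonneg (Real.rpow_nonneg (abs_nonneg t) H), Real.rpow_sub ht', inv_pow,
      div_eq_mul_inv, ← Real.rpow_natCast]
    push_cast
    rfl

end Moments

theorem Real.rpow_sum_le_sum_rpow {ι : Type*} (s : Finset ι) {x : ι → ℝ} (hx : ∀ i ∈ s, 0 ≤ x i)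
    {q : ℝ} (hq₀ : 0 < q) (hq₁ : q ≤ 1) :
    (∑ i ∈ s, x i) ^ q ≤ ∑ i ∈ s, x i ^ q :=
  Finset.le_sum_of_subadditive_on_pred (· ^ q) (0 ≤ ·) (Real.zero_rpow hq₀.ne').le
    (fun _ _ ha hb ↦ Real.rpow_add_le_add_rpow ha hb hq₀.le hq₁) (fun _ _ ↦ add_nonneg) x hx

theorem locallyIntegrable_abs_sub_rpow_s13 (c : ℝ) {r : ℝ} (hr : -1 < r) :
    LocallyIntegrable (fun u : ℝ ↦ |c - u| ^ r) := by
  have h₀ : LocallyIntegrable (fun u : ℝ ↦ |u| ^ r) :=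
    locallyIntegrable_of_norm_le_rpow (C := 1) (α := -r) (by simp) (by simpa using neg_lt.mpr hr)
      (ae_of_all _ fun u ↦ by simp [abs_of_nonneg (Real.rpow_nonneg (abs_nonneg u) r)])
      (Measurable.aestronglyMeasurable (by fun_prop))
  rw [← Measure.map_sub_left_eq_self volume c] at h₀
  exact (locallyIntegrable_map_homeomorph (Homeomorph.subLeft c)).1 h₀

theorem locallyIntegrable_abs_sum_mul_abs_sub_rpow_rpow {ι : Type*} (s : Finset ι)
    (b c : ι → ℝ) {H q : ℝ} (hq₀ : 0 < q) (hq₁ : q ≤ 1) (hHq : -1 < H * q) :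
    LocallyIntegrable (fun t : ℝ ↦ |∑ i ∈ s, b i * |c i - t| ^ H| ^ q) := by
  refine (locallyIntegrable_finsetSum s fun i _ ↦
    (locallyIntegrable_abs_sub_rpow_s13 (c i) hHq).smul (|b i| ^ q)).mono
    (Measurable.aestronglyMeasurable (by fun_prop)) (ae_of_all _ fun t ↦ ?_)
  simp only [Pi.smul_apply, smul_eq_mul]
  rw [Real.norm_of_nonneg (by positivity), Real.norm_of_nonneg (by positivity)]
  calc |∑ i ∈ s, b i * |c i - t| ^ H| ^ q
      ≤ (∑ i ∈ s, |b i| * |c i - t| ^ H) ^ q := by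
        gcongr
        refine (Finset.abs_sum_le_sum_abs _ _).trans_eq (Finset.sum_congr rfl fun i _ ↦ ?_)
        rw [abs_mul, abs_of_nonneg (Real.rpow_nonneg (abs_nonneg _) _)]
    _ ≤ ∑ i ∈ s, (|b i| * |c i - t| ^ H) ^ q := 
        Real.rpow_sum_le_sum_rpow s (fun i _ ↦ by positivity) hq₀ hq₁
    _ = ∑ i ∈ s, |b i| ^ q * |c i - t| ^ (H * q) := by
        refine Finset.sum_congr rfl fun i _ ↦ ?_
        rw [Real.mul_rpow (abs_nonneg _) (by positivity),
          ← Real.rpow_mul (abs_nonneg _)]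

theorem lintegral_comp_abs (f : ℝ → ℝ≥0∞) : ∫⁻ x, f |x| = 2 * ∫⁻ x in Ioi 0, f x := by
  have hpos : ∫⁻ x in Ioi 0, f |x| = ∫⁻ x in Ioi 0, f x :=
    setLIntegral_congr_fun measurableSet_Ioi fun x hx ↦ by rw [abs_of_pos hx]
  have hneg : ∫⁻ x in (Ioi 0)ᶜ, f |x| = ∫⁻ x in Ioi 0, f x := by
    rw [compl_Ioi, show Iic (0 : ℝ) = Neg.neg ⁻¹' Ici 0 by ext; simp,
      ← hpos, setLIntegral_congr Ioi_ae_eq_Ici]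
    simpa only [abs_neg] using (Measure.measurePreserving_neg volume).setLIntegral_comp_preimage_emb
      (Homeomorph.neg ℝ).measurableEmbedding (fun x ↦ f |x|) (Ici 0)
  rw [← lintegral_add_compl _ measurableSet_Ioi, hpos, hneg, two_mul]

theorem setLIntegral_comp_abs (f : ℝ → ℝ≥0∞) {s : Set ℝ} (hs : MeasurableSet s) :
    ∫⁻ x in abs ⁻¹' s, f |x| = 2 * ∫⁻ x in s ∩ Ioi 0, f x := by
  rw [← lintegral_indicator (hs.preimage measurable_abs), ← Measure.restrict_restrict hs,
    ← lintegral_indicator hs]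
  exact lintegral_comp_abs (s.indicator f)

theorem setLIntegral_abs_le_abs_rpow {r : ℝ} (hr : -1 < r) {R : ℝ} (hR : 0 ≤ R) :
    ∫⁻ x in {x : ℝ | |x| ≤ R}, ENNReal.ofReal (|x| ^ r)
      = ENNReal.ofReal (2 * R ^ (r + 1) / (r + 1)) := by
  have hint : IntegrableOn (fun x : ℝ ↦ x ^ r) (Ioc 0 R) :=
    (intervalIntegrable_iff_integrableOn_Ioc_of_le hR).mp
      (intervalIntegral.intervalIntegrable_rpow' hr)
  have hnonneg : 0 ≤ᵐ[volume.restrict (Ioc 0 R)] fun x : ℝ ↦ x ^ r :=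
    (ae_restrict_iff' measurableSet_Ioc).2 (ae_of_all _ fun x hx ↦ Real.rpow_nonneg hx.1.le r)
  rw [show {x : ℝ | |x| ≤ R} = abs ⁻¹' Iic R from rfl,
    setLIntegral_comp_abs (fun x ↦ ENNReal.ofReal (x ^ r)) measurableSet_Iic, Iic_inter_Ioi,
    ← ofReal_integral_eq_lintegral_ofReal hint hnonneg, ← intervalIntegral.integral_of_le hR,
    integral_rpow (Or.inl hr), Real.zero_rpow (by linarith), sub_zero,
    ← ENNReal.ofReal_ofNat 2, ← ENNReal.ofReal_mul zero_le_two, mul_div_assoc]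

theorem setLIntegral_lt_abs_abs_rpow {r : ℝ} (hr : r < -1) {c : ℝ} (hc : 0 < c) :
    ∫⁻ x in {x : ℝ | c < |x|}, ENNReal.ofReal (|x| ^ r)
      = ENNReal.ofReal (2 * c ^ (r + 1) / (-(r + 1))) := by
  have hnonneg : 0 ≤ᵐ[volume.restrict (Ioi c)] fun x : ℝ ↦ x ^ r :=
    (ae_restrict_iff' measurableSet_Ioi).2 (ae_of_all _ fun x hx ↦
      Real.rpow_nonneg (hc.trans hx).le r)
  rw [show {x : ℝ | c < |x|} = abs ⁻¹' Ioi c from rfl,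
    setLIntegral_comp_abs (fun x ↦ ENNReal.ofReal (x ^ r)) measurableSet_Ioi, Ioi_inter_Ioi,
    max_eq_left hc.le,
    ← ofReal_integral_eq_lintegral_ofReal (integrableOn_Ioi_rpow_of_lt hr hc) hnonneg,
    integral_Ioi_rpow_of_lt hr hc, ← ENNReal.ofReal_ofNat 2, ← ENNReal.ofReal_mul zero_le_two,
    div_neg, neg_div, mul_div_assoc, mul_neg]

theorem Real.eventually_cobounded_iff {p : ℝ → Prop} :
    (∀ᶠ x in cobounded ℝ, p x) ↔ ∃ T, ∀ x, T ≤ |x| → p x := by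
  simp only [← comap_norm_atTop, eventually_comap, eventually_atTop, Real.norm_eq_abs]
  exact ⟨fun ⟨T, hT⟩ ↦ ⟨T, fun x hx ↦ hT _ hx x rfl⟩,
    fun ⟨T, hT⟩ ↦ ⟨T, fun _ hb x hx ↦ hT x (hx ▸ hb)⟩⟩

section Correlation

variable {g : ℝ → ℝ} {C T δ : ℝ}

theorem exists_setLIntegral_abs_le_le_mul_rpow (hg : LocallyIntegrable g) (hT : 1 ≤ T)
    (hC : 0 ≤ C) (hδ : δ ≤ -(1 / 2)) (htail : ∀ t, T ≤ |t| → g t ≤ C * |t| ^ δ) :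
    ∃ A, 0 ≤ A ∧ ∀ R, T ≤ R →
      ∫⁻ u in {u : ℝ | |u| ≤ R}, ENNReal.ofReal (g u) ≤ ENNReal.ofReal (A * R ^ (1 / 2 : ℝ)) := by
  set I := ∫⁻ u in {u : ℝ | |u| ≤ T}, ENNReal.ofReal (g u) with hIdef
  have hI : I ≠ ∞ := by
    have hS : {u : ℝ | |u| ≤ T} = Icc (-T) T := by ext; simp [abs_le]
    rw [← lt_top_iff_ne_top, hIdef, hS]
    exact (hg.integrableOn_isCompact isCompact_Icc).lintegral_lt_top
  refine ⟨I.toReal + 4 * C, by positivity, fun R hR ↦ ?_⟩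
  have hR₀ : 0 ≤ R := by linarith
  have hsplit : {u : ℝ | |u| ≤ R} ⊆ {u | |u| ≤ T} ∪ {u | T ≤ |u| ∧ |u| ≤ R} := fun u hu ↦
    (le_total |u| T).imp id fun h ↦ ⟨h, hu⟩
  have hfar : ∫⁻ u in {u : ℝ | T ≤ |u| ∧ |u| ≤ R}, ENNReal.ofReal (g u)
      ≤ ENNReal.ofReal (C * (4 * R ^ (1 / 2 : ℝ))) := calc
    _ ≤ ∫⁻ u in {u : ℝ | T ≤ |u| ∧ |u| ≤ R},
          ENNReal.ofReal C * ENNReal.ofReal (|u| ^ (-(1 / 2) : ℝ)) :=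
        setLIntegral_mono' (measurableSet_le measurable_const measurable_abs |>.inter
          (measurableSet_le measurable_abs measurable_const)) fun u hu ↦ by
          rw [← ENNReal.ofReal_mul hC]
          exact ENNReal.ofReal_le_ofReal ((htail u hu.1).trans (mul_le_mul_of_nonneg_left
            (Real.rpow_le_rpow_of_exponent_le (hT.trans hu.1) hδ) hC))
    _ ≤ ENNReal.ofReal C * ∫⁻ u in {u : ℝ | |u| ≤ R}, ENNReal.ofReal (|u| ^ (-(1 / 2) : ℝ)) := by
        rw [lintegral_const_mul' _ _ ENNReal.ofReal_ne_top]
        exact mul_le_mul_right (lintegral_mono_set fun u hu ↦ hu.2) _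
    _ = ENNReal.ofReal (C * (4 * R ^ (1 / 2 : ℝ))) := by
        rw [setLIntegral_abs_le_abs_rpow (by norm_num) hR₀, ← ENNReal.ofReal_mul hC]
        norm_num
        ring_nf
  have hR₁ : 1 ≤ R ^ (1 / 2 : ℝ) := Real.one_le_rpow (hT.trans hR) (by norm_num)
  calc ∫⁻ u in {u : ℝ | |u| ≤ R}, ENNReal.ofReal (g u)
      ≤ I + ∫⁻ u in {u : ℝ | T ≤ |u| ∧ |u| ≤ R}, ENNReal.ofReal (g u) :=
        (lintegral_mono_set hsplit).trans (lintegral_union_le _ _ _)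
    _ ≤ ENNReal.ofReal I.toReal + ENNReal.ofReal (C * (4 * R ^ (1 / 2 : ℝ))) := by
        rw [ENNReal.ofReal_toReal hI]; gcongr
    _ ≤ ENNReal.ofReal ((I.toReal + 4 * C) * R ^ (1 / 2 : ℝ)) := by
        rw [← ENNReal.ofReal_add ENNReal.toReal_nonneg (by positivity)]
        refine ENNReal.ofReal_le_ofReal ?_
        nlinarith [ENNReal.toReal_nonneg (a := I)]

theorem setLIntegral_abs_le_mul_comp_add_le (hg₀ : 0 ≤ g) (hg : AEMeasurable g) (hT : 0 < T)
    (hC : 0 ≤ C) (hδ : δ ≤ 0) (htail : ∀ t, T ≤ |t| → g t ≤ C * |t| ^ δ) {A : ℝ}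
    (hA : ∀ R, T ≤ R → ∫⁻ u in {u : ℝ | |u| ≤ R}, ENNReal.ofReal (g u)
      ≤ ENNReal.ofReal (A * R ^ (1 / 2 : ℝ)))
    {m : ℝ} (hm : 2 * T ≤ |m|) :
    ∫⁻ s in {s : ℝ | |s| ≤ 2 * |m|}, ENNReal.ofReal (g s * g (s + m))
      ≤ ENNReal.ofReal (2 * 2 ^ (-δ) * 3 ^ (1 / 2 : ℝ) * C * A * |m| ^ (δ + 1 / 2)) := by
  set M := |m| with hM
  have hM₀ : 0 < M := by linarith
  set c := C * (M / 2) ^ δ with hc_def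
  have hc : 0 ≤ c := by positivity
  have hfar : ∀ t, M / 2 ≤ |t| → g t ≤ c := fun t ht ↦ (htail t (by linarith)).trans
    (mul_le_mul_of_nonneg_left (Real.rpow_le_rpow_of_nonpos (by positivity) ht hδ) hC)
  have hpt : ∀ s, g s * g (s + m) ≤ c * (g s + g (s + m)) := by
    intro s
    have : M ≤ |s + m| + |s| := by simpa [hM] using abs_sub (s + m) s
    rcases le_total (M / 2) |s| with h | h
    · nlinarith [mul_le_mul_of_nonneg_right (hfar s h) (hg₀ (s + m)), mul_nonneg hc (hg₀ s)]
    · nlinarith [mul_le_mul_of_nonneg_left (hfar (s + m) (by linarith)) (hg₀ s),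
        mul_nonneg hc (hg₀ (s + m))]
  have hshift : ∫⁻ s in {s : ℝ | |s| ≤ 2 * M}, ENNReal.ofReal (g (s + m))
      ≤ ∫⁻ u in {u : ℝ | |u| ≤ 3 * M}, ENNReal.ofReal (g u) := by
    rw [← (measurePreserving_add_right volume m).setLIntegral_comp_preimage_emb
      (measurableEmbedding_addRight m) (fun u ↦ ENNReal.ofReal (g u))]
    refine lintegral_mono_set fun s hs ↦ ?_
    simp only [mem_ofPred_eq, mem_preimage] at hs ⊢
    linarith [abs_add_le s m]
  have hB := hA (3 * M) (by linarith)
  calc ∫⁻ s in {s : ℝ | |s| ≤ 2 * M}, ENNReal.ofReal (g s * g (s + m))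
      ≤ ∫⁻ s in {s : ℝ | |s| ≤ 2 * M},
          ENNReal.ofReal c * (ENNReal.ofReal (g s) + ENNReal.ofReal (g (s + m))) :=
        lintegral_mono fun s ↦ by
          rw [← ENNReal.ofReal_add (hg₀ s) (hg₀ _), ← ENNReal.ofReal_mul hc]
          exact ENNReal.ofReal_le_ofReal (hpt s)
    _ = ENNReal.ofReal c * ((∫⁻ s in {s : ℝ | |s| ≤ 2 * M}, ENNReal.ofReal (g s))
          + ∫⁻ s in {s : ℝ | |s| ≤ 2 * M}, ENNReal.ofReal (g (s + m))) := by
        rw [lintegral_const_mul' _ _ ENNReal.ofReal_ne_top,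
          lintegral_add_left' hg.ennreal_ofReal.restrict]
    _ ≤ ENNReal.ofReal c * (ENNReal.ofReal (A * (3 * M) ^ (1 / 2 : ℝ))
          + ENNReal.ofReal (A * (3 * M) ^ (1 / 2 : ℝ))) := by
        gcongr
        · refine (lintegral_mono_set fun s hs ↦ ?_).trans hB
          simp only [mem_ofPred_eq] at hs ⊢
          linarith
        · exact hshift.trans hB
    _ = ENNReal.ofReal (2 * 2 ^ (-δ) * 3 ^ (1 / 2 : ℝ) * C * A * M ^ (δ + 1 / 2)) := by
        rw [← two_mul, ← ENNReal.ofReal_ofNat 2, ← ENNReal.ofReal_mul zero_le_two,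
          ← ENNReal.ofReal_mul hc, hc_def, Real.div_rpow hM₀.le zero_le_two,
          Real.mul_rpow zero_le_three hM₀.le, Real.rpow_add hM₀, Real.rpow_neg zero_le_two]
        ring_nf

theorem setLIntegral_lt_abs_mul_comp_add_le (hg₀ : 0 ≤ g) (hT : 1 ≤ T) (hC : 0 ≤ C)
    (hδ : δ < -(1 / 2)) (htail : ∀ t, T ≤ |t| → g t ≤ C * |t| ^ δ) {m : ℝ} (hm : 2 * T ≤ |m|) :
    ∫⁻ s in {s : ℝ | 2 * |m| < |s|}, ENNReal.ofReal (g s * g (s + m))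
      ≤ ENNReal.ofReal (C ^ 2 * 2 ^ (-δ) * (2 * 2 ^ (2 * δ + 1) / (-(2 * δ + 1)))
          * |m| ^ (δ + 1 / 2)) := by
  set M := |m| with hM
  have hM₁ : 1 ≤ M := by linarith
  have hM₀ : 0 < M := by linarith
  have hpt : ∀ s ∈ {s : ℝ | 2 * M < |s|}, ENNReal.ofReal (g s * g (s + m))
      ≤ ENNReal.ofReal (C ^ 2 * 2 ^ (-δ)) * ENNReal.ofReal (|s| ^ (2 * δ)) := by
    intro s (hs : 2 * M < |s|)
    have hs₀ : 0 < |s| := by linarith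
    have hsm : |s| / 2 ≤ |s + m| := by
      have : |s| ≤ |s + m| + M := by simpa [hM] using abs_sub (s + m) m
      linarith
    have h₁ : g s ≤ C * |s| ^ δ := htail s (by linarith)
    have h₂ : g (s + m) ≤ C * (2 ^ (-δ) * |s| ^ δ) := by
      rw [Real.rpow_neg zero_le_two, ← div_eq_inv_mul, ← Real.div_rpow hs₀.le zero_le_two]
      exact (htail _ (by linarith)).trans (mul_le_mul_of_nonneg_left
        (Real.rpow_le_rpow_of_nonpos (by positivity) hsm (by linarith)) hC)
    rw [← ENNReal.ofReal_mul (by positivity)]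
    refine ENNReal.ofReal_le_ofReal ((mul_le_mul h₁ h₂ (hg₀ _) (by positivity)).trans_eq ?_)
    rw [mul_comm 2 δ, Real.rpow_mul hs₀.le, Real.rpow_two]
    ring
  have hexp : 0 < -(2 * δ + 1) := by linarith
  calc ∫⁻ s in {s : ℝ | 2 * M < |s|}, ENNReal.ofReal (g s * g (s + m))
      ≤ ∫⁻ s in {s : ℝ | 2 * M < |s|},
          ENNReal.ofReal (C ^ 2 * 2 ^ (-δ)) * ENNReal.ofReal (|s| ^ (2 * δ)) :=
        setLIntegral_mono' (measurableSet_lt measurable_const measurable_abs) hpt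
    _ = ENNReal.ofReal (C ^ 2 * 2 ^ (-δ) * (2 * (2 * M) ^ (2 * δ + 1) / (-(2 * δ + 1)))) := by
        rw [lintegral_const_mul' _ _ ENNReal.ofReal_ne_top,
          setLIntegral_lt_abs_abs_rpow (by linarith) (by positivity),
          ← ENNReal.ofReal_mul (by positivity)]
    _ ≤ _ := by
        refine ENNReal.ofReal_le_ofReal ?_
        rw [Real.mul_rpow zero_le_two hM₀.le, ← mul_assoc, mul_div_right_comm, ← mul_assoc]
        exact mul_le_mul_of_nonneg_left (Real.rpow_le_rpow_of_exponent_le hM₁ (by linarith))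
          (mul_nonneg (by positivity) (div_nonneg (by positivity) hexp.le))

theorem exists_eventually_lintegral_mul_comp_add_le (hg₀ : 0 ≤ g)
    (hg : LocallyIntegrable g) (hδ : δ < -(1 / 2)) (hgO : g =O[cobounded ℝ] fun t ↦ |t| ^ δ) :
    ∃ C, ∀ᶠ m in cobounded ℝ,
      ∫⁻ s, ENNReal.ofReal (g s * g (s + m)) ≤ ENNReal.ofReal (C * |m| ^ (δ + 1 / 2)) := by
  obtain ⟨C, hC, hCg⟩ := hgO.exists_pos
  obtain ⟨T, hT⟩ := Real.eventually_cobounded_iff.1 hCg.bound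
  have htail : ∀ t, max T 1 ≤ |t| → g t ≤ C * |t| ^ δ := fun t ht ↦ by
    simpa [abs_of_nonneg (hg₀ t), abs_of_nonneg (Real.rpow_nonneg (abs_nonneg t) δ)]
      using hT t (le_of_max_le_left ht)
  have hT₁ : 1 ≤ max T 1 := le_max_right T 1
  obtain ⟨A, hA₀, hA⟩ := exists_setLIntegral_abs_le_le_mul_rpow hg hT₁ hC.le hδ.le htail
  refine ⟨2 * 2 ^ (-δ) * 3 ^ (1 / 2 : ℝ) * C * A
    + C ^ 2 * 2 ^ (-δ) * (2 * 2 ^ (2 * δ + 1) / (-(2 * δ + 1))),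
    Real.eventually_cobounded_iff.2 ⟨2 * max T 1, fun m hm ↦ ?_⟩⟩
  rw [← lintegral_add_compl _ (measurableSet_le measurable_abs measurable_const :
    MeasurableSet {s : ℝ | |s| ≤ 2 * |m|}), compl_ofPred]
  simp only [not_le]
  refine (add_le_add (setLIntegral_abs_le_mul_comp_add_le hg₀ hg.aestronglyMeasurable.aemeasurable
    (by linarith) hC.le (by linarith) htail hA hm)
    (setLIntegral_lt_abs_mul_comp_add_le hg₀ hT₁ hC.le hδ htail hm)).trans_eq ?_
  rw [← ENNReal.ofReal_add (by positivity) (mul_nonneg (mul_nonneg (by positivity)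
    (div_nonneg (by positivity) (by linarith))) (by positivity)), ← add_mul]

end Correlation

theorem exists_nat_forall_int_of_eventually_cobounded {p : ℝ → Prop}
    (h : ∀ᶠ x in cobounded ℝ, p x) : ∃ K₀ : ℕ, 1 ≤ K₀ ∧ ∀ m : ℤ, (K₀ : ℤ) ≤ |m| → p m := by
  obtain ⟨T, hT⟩ := Real.eventually_cobounded_iff.1 h
  refine ⟨⌈T⌉₊ + 1, by omega, fun m hm ↦ hT m ?_⟩
  have : ((⌈T⌉₊ + 1 : ℕ) : ℝ) ≤ |(m : ℝ)| := by exact_mod_cast hm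
  push_cast at this
  linarith [Nat.le_ceil T]

theorem translate_product_decay_general
    (K L : ℕ) (a : ℕ → ℝ)
    (hmom : ∀ q ≤ L, ∑ k ∈ Finset.range (K + 1), (k : ℝ) ^ q * a k = 0)
    (α : ℝ) (hα : 0 < α) (hα2 : α ≤ 2) (H₀ : ℝ) (hH₀ : H₀ ∈ Set.Ioo (0 : ℝ) 1) :
    ∃ C > (0 : ℝ), ∃ K₀ : ℕ, 1 ≤ K₀ ∧ ∀ m : ℤ, (K₀ : ℤ) ≤ |m| →
      ∫⁻ s : ℝ, ENNReal.ofReal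
          (|∑ p ∈ Finset.range (K + 1), a p * |(p : ℝ) - s| ^ (H₀ - 1 / α)| ^ (α / 2) *
            |∑ p' ∈ Finset.range (K + 1),
                a p' * |(p' : ℝ) - s - (m : ℝ)| ^ (H₀ - 1 / α)| ^ (α / 2))
        ≤ ENNReal.ofReal (C * |(m : ℝ)| ^ (α * (H₀ - ((L : ℝ) + 1)) / 2)) := by
  obtain ⟨hH₀pos, hH₀lt⟩ := hH₀
  set H := H₀ - 1 / α with hH
  set g : ℝ → ℝ := fun t ↦ |∑ p ∈ Finset.range (K + 1), a p * |(p : ℝ) - t| ^ H| ^ (α / 2)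
  have hgO : g =O[cobounded ℝ] fun t ↦ |t| ^ ((H - (L + 1)) * (α / 2)) :=
    ((isBigO_sum_mul_abs_sub_rpow hmom H).abs_left.rpow (by positivity)
      (Eventually.of_forall fun t ↦ by positivity)).congr_right fun t ↦ by
        rw [← Real.rpow_mul (abs_nonneg t)]
  have hexp : (H - (L + 1)) * (α / 2) + 1 / 2 = α * (H₀ - (L + 1)) / 2 := by
    rw [hH]; field_simp; ring
  have hδ : (H - (L + 1)) * (α / 2) < -(1 / 2) := by
    have : α * (H₀ - (L + 1)) < 0 :=
      mul_neg_of_pos_of_neg hα (by linarith [(L.cast_nonneg : (0 : ℝ) ≤ L)])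
    linarith
  have hHα : H * (α / 2) = (α * H₀ - 1) / 2 := by
    rw [hH]; field_simp
  have hgloc := locallyIntegrable_abs_sum_mul_abs_sub_rpow_rpow (Finset.range (K + 1)) a
    (fun p ↦ (p : ℝ)) (H := H) (q := α / 2) (by positivity) (by linarith)
    (by rw [hHα]; linarith [mul_pos hα hH₀pos])
  obtain ⟨C, hC⟩ :=
    exists_eventually_lintegral_mul_comp_add_le (fun t ↦ by positivity) hgloc hδ hgO
  obtain ⟨K₀, hK₀, hK₀m⟩ := exists_nat_forall_int_of_eventually_cobounded hC
  refine ⟨max C 1, by positivity, K₀, hK₀, fun m hm ↦ ?_⟩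
  simp only [sub_sub]
  refine (hK₀m m hm).trans ?_
  rw [hexp]
  exact ENNReal.ofReal_le_ofReal (mul_le_mul_of_nonneg_right (le_max_left C 1) (by positivity))

theorem translate_product_decay
    (K L : ℕ) (hK : 1 ≤ K) (hL : 1 ≤ L) (a : ℕ → ℝ)
    (hmom : ∀ q ≤ L, ∑ k ∈ Finset.range (K + 1), (k : ℝ) ^ q * a k = 0)
    (hmom' : ∑ k ∈ Finset.range (K + 1), (k : ℝ) ^ (L + 1) * a k ≠ 0)
    (α : ℝ) (hα : 0 < α) (hα2 : α ≤ 2) (H₀ : ℝ) (hH₀ : H₀ ∈ Set.Ioo (0 : ℝ) 1) :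
    ∃ C > (0 : ℝ), ∃ K₀ : ℕ, 1 ≤ K₀ ∧ ∀ m : ℤ, (K₀ : ℤ) ≤ |m| →
      ∫⁻ s : ℝ, ENNReal.ofReal
          (|∑ p ∈ Finset.range (K + 1), a p * |(p : ℝ) - s| ^ (H₀ - 1 / α)| ^ (α / 2) *
            |∑ p' ∈ Finset.range (K + 1),
                a p' * |(p' : ℝ) - s - (m : ℝ)| ^ (H₀ - 1 / α)| ^ (α / 2))
        ≤ ENNReal.ofReal (C * |(m : ℝ)| ^ (α * (H₀ - ((L : ℝ) + 1)) / 2)) :=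
  translate_product_decay_general K L a hmom α hα hα2 H₀ hH₀
end
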